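/- Let V be a vector space over F_q (q > 7, q odd) with a nondegenerate symmetric bilinear form, let l and m be elliptic 2-dimensional subspaces with ⟨l, m⟩ of dimension 4 and with a 1-dimensional radical ⟨x⟩ = rad⟨l,m⟩. Let s = ⟨l,x⟩ ∩ ⟨m,x⟩, y = l ∩ s, z = m ∩ s. Then every 2-dimensional subspace of ⟨l,x⟩ through z other than s is elliptic, and for every 1-dimensional subspace ⟨p⟩ ≤ l with p ∉ s, the 3-dimensional subspace ⟨p, m⟩ is nondegenerate. -/

import Mathlib

open Module

/-- The radical of a subspace `W` with respect to a bilinear form `B`: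
`rad(W) = W ∩ W^⊥`. -/
def bilinRadical {F V : Type*} [Field F] [AddCommGroup V] [Module F V]
    (B : LinearMap.BilinForm F V) (W : Submodule F V) : Submodule F V :=
  W ⊓ B.orthogonal W

/-- A subspace `W` is an *elliptic line* for `B` if it is 2-dimensional,
nondegenerate and anisotropic. -/
def IsEllipticLine {F V : Type*} [Field F] [AddCommGroup V] [Module F V]
    (B : LinearMap.BilinForm F V) (W : Submodule F V) : Prop :=
  finrank F W = 2 ∧ (B.restrict W).Nondegenerate ∧ ∀ v ∈ W, B v v = 0 → v = 0

/-!
Since `x` spans the radical of `⟨l,m⟩`, adding a multiple of `x` to a vector of `l` does not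
change its norm, so the isotropic vectors of `⟨l,x⟩` all lie in `⟨x⟩`. A plane of `⟨l,x⟩`
avoiding `x` is therefore anisotropic, hence elliptic; and a plane `U` through `z` with `x ∈ U`
would be `⟨x, z⟩ = s`. For `p ∈ l` outside `s`, the 3-space `⟨p,m⟩` cannot contain `x`
(it would then equal `⟨m,x⟩ ∋ p`), so it is a complement of the radical `⟨x⟩` in `⟨l,m⟩`,
and such a complement is nondegenerate.
-/

open Submodule

section

variable {F V : Type*} [Field F] [AddCommGroup V] [Module F V]

theorem Submodule.finrank_sup_span_singleton_of_notMem {W : Submodule F V}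
    [FiniteDimensional F W] {v : V} (hv : v ∉ W) :
    finrank F ↥(W ⊔ span F {v}) = finrank F W + 1 := by
  have h := finrank_sup_add_finrank_inf_eq W (span F {v})
  rwa [disjoint_iff.mp (disjoint_span_singleton_of_notMem hv), finrank_bot, add_zero,
    finrank_span_singleton (by rintro rfl; exact hv W.zero_mem)] at h

theorem Submodule.finrank_sup_span_singleton_inf_add {l m : Submodule F V}
    [FiniteDimensional F l] [FiniteDimensional F m] {x : V} (hxl : x ∉ l) (hxm : x ∉ m)
    (hx : x ∈ l ⊔ m) :
    finrank F ↥((l ⊔ span F {x}) ⊓ (m ⊔ span F {x})) + finrank F ↥(l ⊔ m) =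
      finrank F l + finrank F m + 2 := by
  have hsup : (l ⊔ span F {x}) ⊔ (m ⊔ span F {x}) = l ⊔ m := by
    rw [sup_sup_sup_comm, sup_idem, sup_eq_left.mpr ((span_singleton_le_iff_mem _ _).mpr hx)]
  have h := finrank_sup_add_finrank_inf_eq (l ⊔ span F {x}) (m ⊔ span F {x})
  rw [hsup, finrank_sup_span_singleton_of_notMem hxl, finrank_sup_span_singleton_of_notMem hxm] at h
  omega

/-- `s = (m ⊓ s) ⊔ ⟨x⟩`, as the planes `m` and `s` of the 3-space `m ⊔ ⟨x⟩` meet. -/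
theorem Submodule.eq_of_mem_of_inf_le {m s U : Submodule F V} {x : V}
    (hm : finrank F m = 2) (hs : finrank F s = 2) (hU : finrank F U = 2) (hxm : x ∉ m)
    (hsm : s ≤ m ⊔ span F {x}) (hxs : x ∈ s) (hxU : x ∈ U) (hmsU : m ⊓ s ≤ U) : U = s := by
  have : FiniteDimensional F m := finite_of_finrank_pos (by omega)
  have : FiniteDimensional F s := finite_of_finrank_pos (by omega)
  have : FiniteDimensional F U := finite_of_finrank_pos (by omega)
  have hms : 1 ≤ finrank F ↥(m ⊓ s) := by
    have hsup := finrank_mono (sup_le (le_sup_left : m ≤ m ⊔ span F {x}) hsm)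
    rw [finrank_sup_span_singleton_of_notMem hxm] at hsup
    have := finrank_sup_add_finrank_inf_eq m s
    omega
  have hmsx : finrank F ↥((m ⊓ s) ⊔ span F {x}) = finrank F ↥(m ⊓ s) + 1 :=
    finrank_sup_span_singleton_of_notMem fun h => hxm h.1
  have hU_eq : (m ⊓ s) ⊔ span F {x} = U :=
    eq_of_le_of_finrank_le (sup_le hmsU ((span_singleton_le_iff_mem _ _).mpr hxU)) (by omega)
  have hs_eq : (m ⊓ s) ⊔ span F {x} = s :=
    eq_of_le_of_finrank_le (sup_le inf_le_right ((span_singleton_le_iff_mem _ _).mpr hxs))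
      (by omega)
  exact hU_eq.symm.trans hs_eq

namespace LinearMap.BilinForm

variable {B : LinearMap.BilinForm F V}

theorem nondegenerate_restrict_of_anisotropic (hB : B.IsRefl) {W : Submodule F V}
    (hW : ∀ v ∈ W, B v v = 0 → v = 0) : (B.restrict W).Nondegenerate :=
  B.nondegenerate_restrict_of_disjoint_orthogonal hB <|
    disjoint_def.mpr fun v hv hvW => hW v hv (hvW v hv)

theorem apply_add_smul_self_of_mem_bilinRadical (hB : B.IsRefl) {T : Submodule F V} {w x : V}
    (hw : w ∈ T) (hx : x ∈ bilinRadical B T) (c : F) :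
    B (w + c • x) (w + c • x) = B w w := by
  have hwx : B w x = 0 := hx.2 w hw
  have hxx : B x x = 0 := hx.2 x hx.1
  simp [hwx, hB w x hwx, hxx]

theorem mem_span_singleton_of_apply_self_eq_zero (hB : B.IsRefl) {l T : Submodule F V} {x v : V}
    (hl : ∀ v ∈ l, B v v = 0 → v = 0) (hlT : l ≤ T) (hx : x ∈ bilinRadical B T)
    (hv : v ∈ l ⊔ span F {x}) (hvv : B v v = 0) : v ∈ span F {x} := by
  obtain ⟨w, hw, y, hy, rfl⟩ := mem_sup.mp hv
  obtain ⟨c, rfl⟩ := mem_span_singleton.mp hy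
  rw [apply_add_smul_self_of_mem_bilinRadical hB (hlT hw) hx] at hvv
  rw [hl w hw hvv, zero_add]
  exact smul_mem _ c (mem_span_singleton_self x)

theorem nondegenerate_restrict_of_sup_bilinRadical (hB : B.IsRefl) {W T : Submodule F V}
    (hWT : W ⊔ bilinRadical B T = T) (hW : Disjoint W (bilinRadical B T)) :
    (B.restrict W).Nondegenerate := by
  refine B.nondegenerate_restrict_of_disjoint_orthogonal hB <|
    disjoint_def.mpr fun u hu huW => disjoint_def.mp hW u hu ⟨hWT ▸ mem_sup_left hu, ?_⟩
  rw [← hWT]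
  intro n hn
  obtain ⟨w, hw, r, hr, rfl⟩ := mem_sup.mp hn
  have hur : B u r = 0 := hr.2 u (hWT ▸ mem_sup_left hu)
  show B (w + r) u = 0
  rw [map_add, LinearMap.add_apply, huW w hw, hB u r hur, add_zero]

theorem isEllipticLine_of_le_sup_span_singleton (hB : B.IsRefl) {l T U : Submodule F V} {x : V}
    (hl : ∀ v ∈ l, B v v = 0 → v = 0) (hlT : l ≤ T) (hx : x ∈ bilinRadical B T)
    (hUl : U ≤ l ⊔ span F {x}) (hU : finrank F U = 2) (hxU : x ∉ U) : IsEllipticLine B U := by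
  have hUaniso : ∀ v ∈ U, B v v = 0 → v = 0 := fun v hv hvv => by
    obtain ⟨c, rfl⟩ :=
      mem_span_singleton.mp (mem_span_singleton_of_apply_self_eq_zero hB hl hlT hx (hUl hv) hvv)
    by_contra hc
    exact hxU ((smul_mem_iff U (left_ne_zero_of_smul hc)).mp hv)
  exact ⟨hU, nondegenerate_restrict_of_anisotropic hB hUaniso, hUaniso⟩

theorem nondegenerate_restrict_span_singleton_sup (hB : B.IsRefl) {l m : Submodule F V}
    {x p : V} (hm : finrank F m = 2) (hlm : finrank F ↥(l ⊔ m) = 4)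
    (hrad : bilinRadical B (l ⊔ m) = span F {x}) (hxm : x ∉ m) (hpl : p ∈ l)
    (hps : p ∉ (l ⊔ span F {x}) ⊓ (m ⊔ span F {x})) :
    finrank F ↥(span F {p} ⊔ m) = 3 ∧ (B.restrict (span F {p} ⊔ m)).Nondegenerate := by
  have : FiniteDimensional F m := finite_of_finrank_pos (by omega)
  have : FiniteDimensional F ↥(l ⊔ m) := finite_of_finrank_pos (by omega)
  have hpm : p ∉ m := fun h => hps ⟨mem_sup_left hpl, mem_sup_left h⟩
  have hW : finrank F ↥(span F {p} ⊔ m) = 3 := by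
    rw [sup_comm, finrank_sup_span_singleton_of_notMem hpm, hm]
  have hxW : x ∉ span F {p} ⊔ m := fun hxW => by
    have hMW : m ⊔ span F {x} = span F {p} ⊔ m :=
      eq_of_le_of_finrank_eq (sup_le le_sup_right ((span_singleton_le_iff_mem _ _).mpr hxW))
        (by rw [finrank_sup_span_singleton_of_notMem hxm, hm, hW])
    exact hps ⟨mem_sup_left hpl, hMW ▸ mem_sup_left (mem_span_singleton_self p)⟩
  have hWx : (span F {p} ⊔ m) ⊔ span F {x} = l ⊔ m := by
    refine eq_of_le_of_finrank_eq (sup_le (sup_le ?_ le_sup_right) (hrad ▸ inf_le_left)) ?_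
    · exact ((span_singleton_le_iff_mem _ _).mpr hpl).trans le_sup_left
    · rw [finrank_sup_span_singleton_of_notMem hxW, hW, hlm]
  refine ⟨hW, nondegenerate_restrict_of_sup_bilinRadical (T := l ⊔ m) hB ?_ ?_⟩
  · rwa [hrad]
  · rw [hrad]
    exact disjoint_span_singleton_of_notMem hxW

end LinearMap.BilinForm

end

open LinearMap.BilinForm

theorem elliptic_lines_degenerate_four_space_general
    {F V : Type*} [Field F] [AddCommGroup V] [Module F V]
    (B : LinearMap.BilinForm F V) (hsymm : B.IsSymm)
    (l m : Submodule F V) (hl : IsEllipticLine B l) (hm : IsEllipticLine B m)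
    (h4 : finrank F (l ⊔ m : Submodule F V) = 4)
    (x : V) (hx : x ≠ 0) (hrad : bilinRadical B (l ⊔ m) = Submodule.span F {x}) :
    (∀ U : Submodule F V, U ≤ l ⊔ Submodule.span F {x} → finrank F U = 2 →
      m ⊓ ((l ⊔ Submodule.span F {x}) ⊓ (m ⊔ Submodule.span F {x})) ≤ U →
      U ≠ (l ⊔ Submodule.span F {x}) ⊓ (m ⊔ Submodule.span F {x}) →
      IsEllipticLine B U) ∧
    (∀ p : V, p ∈ l → p ∉ (l ⊔ Submodule.span F {x}) ⊓ (m ⊔ Submodule.span F {x}) →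
      finrank F (Submodule.span F {p} ⊔ m : Submodule F V) = 3 ∧
      (B.restrict (Submodule.span F {p} ⊔ m)).Nondegenerate) := by
  have : FiniteDimensional F l := finite_of_finrank_pos (hl.1 ▸ two_pos)
  have : FiniteDimensional F m := finite_of_finrank_pos (hm.1 ▸ two_pos)
  have hxrad : x ∈ bilinRadical B (l ⊔ m) := hrad ▸ mem_span_singleton_self x
  have hxx : B x x = 0 := hxrad.2 x hxrad.1
  have hxl : x ∉ l := fun h => hx (hl.2.2 x h hxx)
  have hxm : x ∉ m := fun h => hx (hm.2.2 x h hxx)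
  have hs : finrank F ↥((l ⊔ span F {x}) ⊓ (m ⊔ span F {x})) = 2 := by
    have := finrank_sup_span_singleton_inf_add hxl hxm hxrad.1
    rw [hl.1, hm.1, h4] at this
    omega
  have hxs : x ∈ (l ⊔ span F {x}) ⊓ (m ⊔ span F {x}) :=
    ⟨mem_sup_right (mem_span_singleton_self x), mem_sup_right (mem_span_singleton_self x)⟩
  refine ⟨fun U hUl hU hmsU hUs => ?_, fun p hpl hps =>
    nondegenerate_restrict_span_singleton_sup hsymm.isRefl hm.1 h4 hrad hxm hpl hps⟩
  refine isEllipticLine_of_le_sup_span_singleton hsymm.isRefl hl.2.2 le_sup_left hxrad hUl hU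
    fun hxU => hUs ?_
  exact eq_of_mem_of_inf_le hm.1 hs hU hxm inf_le_right hxs hxU hmsU

/-- Over `F_q` (`q > 7` odd): let `l`, `m` be elliptic lines with `⟨l,m⟩` of
dimension 4 and 1-dimensional radical `⟨x⟩`, and let `s = ⟨l,x⟩ ∩ ⟨m,x⟩`,
`z = m ∩ s`.  Then every 2-dimensional subspace of `⟨l,x⟩` through `z` other than `s`
is elliptic, and for every point `⟨p⟩ ≤ l` with `p ∉ s`, the 3-space `⟨p,m⟩` is
nondegenerate. -/
theorem elliptic_lines_degenerate_four_space
    {F V : Type*} [Field F] [Fintype F] [AddCommGroup V] [Module F V]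
    (q : ℕ) (hq : Fintype.card F = q) (hodd : Odd q) (hq7 : 7 < q)
    (B : LinearMap.BilinForm F V) (hsymm : B.IsSymm) (hB : B.Nondegenerate)
    (l m : Submodule F V) (hl : IsEllipticLine B l) (hm : IsEllipticLine B m)
    (h4 : finrank F (l ⊔ m : Submodule F V) = 4)
    (x : V) (hx : x ≠ 0) (hrad : bilinRadical B (l ⊔ m) = Submodule.span F {x}) :
    (∀ U : Submodule F V, U ≤ l ⊔ Submodule.span F {x} → finrank F U = 2 →
      m ⊓ ((l ⊔ Submodule.span F {x}) ⊓ (m ⊔ Submodule.span F {x})) ≤ U →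
      U ≠ (l ⊔ Submodule.span F {x}) ⊓ (m ⊔ Submodule.span F {x}) →
      IsEllipticLine B U) ∧
    (∀ p : V, p ∈ l → p ∉ (l ⊔ Submodule.span F {x}) ⊓ (m ⊔ Submodule.span F {x}) →
      finrank F (Submodule.span F {p} ⊔ m : Submodule F V) = 3 ∧
      (B.restrict (Submodule.span F {p} ⊔ m)).Nondegenerate) :=
  elliptic_lines_degenerate_four_space_general B hsymm l m hl hm h4 x hx hrad
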